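/- arXiv:2203.11251 — 3 statements merged into one kernel-verified Lean document; each statement's English description precedes it below -/
import Mathlib

section
/- Let c1, K, h, τ > 0 with c1 > 2K/(hτ²), and let c2 ≥ 2. Define f(λ) = c1 if λ ≤ 2K/(hτ²), and f(λ) = c1·(√(2K/(hλ))/τ)^{c2} otherwise. Set w = 2K/(hτ²c1) (so 0 < w < 1). Then f(c1) = c1·w^{c2/2} ≤ 2K/(hτ²) and f(c1·w^{c2/2}) = c1; hence the sequence λ_{k+1} = f(λ_k) starting from λ₀ = c1 is 2-periodic, cycling between c1 and c1·w^{c2/2}. -/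
open Real

/-!
Write `A = 2K/(hτ²)`, so that `√(2K/(hλ))/τ = √(A/λ)` and `w = A/c1`. Since `c1 > A`, the
first update leaves the binding regime and gives `c1·(√w)^{c2} = c1·w^{c2/2}`. As `w < 1` and
`c2/2 ≥ 1`, this is at most `c1·w = A`, so the second update is back in the binding regime and
returns `c1`.
-/

noncomputable def demandUpdate (c1 c2 A lam : ℝ) : ℝ :=
  if lam ≤ A then c1 else c1 * √(A / lam) ^ c2

theorem sqrt_div_mul_div_eq_sqrt_div (K h τ lam : ℝ) (hτ : 0 < τ) :
    √(2 * K / (h * lam)) / τ = √(2 * K / (h * τ ^ 2) / lam) := by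
  rw [← sqrt_sq hτ.le, ← sqrt_div' _ (sq_nonneg τ), sqrt_sq hτ.le]
  ring_nf

theorem demandUpdate_of_le {c1 c2 A lam : ℝ} (h : lam ≤ A) : demandUpdate c1 c2 A lam = c1 :=
  if_pos h

theorem demandUpdate_of_lt {c1 c2 A : ℝ} (hA : 0 ≤ A) (h : A < c1) :
    demandUpdate c1 c2 A c1 = c1 * (A / c1) ^ (c2 / 2) := by
  have hc1 : 0 < c1 := hA.trans_lt h
  rw [demandUpdate, if_neg h.not_ge, rpow_div_two_eq_sqrt _ (div_nonneg hA hc1.le)]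

theorem mul_div_rpow_le {c1 c2 A : ℝ} (hA : 0 ≤ A) (h : A < c1) (hc2 : 2 ≤ c2) :
    c1 * (A / c1) ^ (c2 / 2) ≤ A := by
  have hc1 : 0 < c1 := hA.trans_lt h
  calc c1 * (A / c1) ^ (c2 / 2)
      ≤ c1 * (A / c1) := by
        gcongr
        exact rpow_le_self_of_le_one (div_nonneg hA hc1.le)
          ((div_le_one hc1).mpr h.le) (by linarith)
    _ = A := mul_div_cancel₀ A hc1.ne'

theorem period_two_of_swap {α : Type*} {f : α → α} {a b : α} (hab : f a = b) (hba : f b = a)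
    {x : ℕ → α} (h0 : x 0 = a) (hrec : ∀ k, x (k + 1) = f (x k)) (k : ℕ) :
    x (2 * k) = a ∧ x (2 * k + 1) = b := by
  induction k with
  | zero => exact ⟨h0, by rw [hrec, h0, hab]⟩
  | succ k ih =>
    have heven : x (2 * (k + 1)) = a := by rw [mul_add, mul_one, hrec, ih.2, hba]
    exact ⟨heven, by rw [hrec, heven, hab]⟩

theorem stmt_1_general (c1 K h τ c2 : ℝ) (hK : 0 < K) (hh : 0 < h) (hτ : 0 < τ)
    (hbound : 2 * K / (h * τ ^ 2) < c1) (hc2 : 2 ≤ c2)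
    (f : ℝ → ℝ)
    (hf : ∀ lam : ℝ, f lam = if lam ≤ 2 * K / (h * τ ^ 2) then c1
        else c1 * (Real.sqrt (2 * K / (h * lam)) / τ) ^ c2)
    (w : ℝ) (hw : w = 2 * K / (h * τ ^ 2 * c1))
    (lam : ℕ → ℝ) (hlam0 : lam 0 = c1) (hrec : ∀ k : ℕ, lam (k + 1) = f (lam k)) :
    0 < w ∧ w < 1 ∧
    f c1 = c1 * w ^ (c2 / 2) ∧
    c1 * w ^ (c2 / 2) ≤ 2 * K / (h * τ ^ 2) ∧
    f (c1 * w ^ (c2 / 2)) = c1 ∧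
    (∀ k : ℕ, lam (2 * k) = c1 ∧ lam (2 * k + 1) = c1 * w ^ (c2 / 2)) := by
  set A := 2 * K / (h * τ ^ 2) with hA_def
  have hA : 0 < A := by positivity
  have hc1 : 0 < c1 := hA.trans hbound
  have hf' : f = demandUpdate c1 c2 A := by
    ext lam
    rw [hf, demandUpdate, sqrt_div_mul_div_eq_sqrt_div K h τ lam hτ]
  obtain rfl : w = A / c1 := by rw [hw, hA_def, div_div]
  have hfc1 : f c1 = c1 * (A / c1) ^ (c2 / 2) := by rw [hf', demandUpdate_of_lt hA.le hbound]
  have hle := mul_div_rpow_le hA.le hbound hc2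
  have hflow : f (c1 * (A / c1) ^ (c2 / 2)) = c1 := by rw [hf', demandUpdate_of_le hle]
  exact ⟨div_pos hA hc1, (div_lt_one hc1).mpr hbound, hfc1, hle, hflow,
    period_two_of_swap hfc1 hflow hlam0 hrec⟩

/-- Theorem 1(ii): with large potential market `c1 > 2K/(hτ²)` and high sensitivity
`c2 ≥ 2`, the demand dynamics cycle between `c1` and `c1·w^{c2/2}` where
`w = 2K/(hτ²c1)`. -/
theorem stmt_1 (c1 K h τ c2 : ℝ) (hc1 : 0 < c1) (hK : 0 < K) (hh : 0 < h) (hτ : 0 < τ)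
    (hbound : 2 * K / (h * τ ^ 2) < c1) (hc2 : 2 ≤ c2)
    (f : ℝ → ℝ)
    (hf : ∀ lam : ℝ, f lam = if lam ≤ 2 * K / (h * τ ^ 2) then c1
        else c1 * (Real.sqrt (2 * K / (h * lam)) / τ) ^ c2)
    (w : ℝ) (hw : w = 2 * K / (h * τ ^ 2 * c1))
    (lam : ℕ → ℝ) (hlam0 : lam 0 = c1) (hrec : ∀ k : ℕ, lam (k + 1) = f (lam k)) :
    0 < w ∧ w < 1 ∧
    f c1 = c1 * w ^ (c2 / 2) ∧
    c1 * w ^ (c2 / 2) ≤ 2 * K / (h * τ ^ 2) ∧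
    f (c1 * w ^ (c2 / 2)) = c1 ∧
    (∀ k : ℕ, lam (2 * k) = c1 ∧ lam (2 * k + 1) = c1 * w ^ (c2 / 2)) :=
  stmt_1_general c1 K h τ c2 hK hh hτ hbound hc2 f hf w hw lam hlam0 hrec
end

section
/- Let c1, K, h, τ > 0 with c1 > 2K/(hτ²) and 0 < c2 < 2. Set w = 2K/(hτ²c1) ∈ (0,1). Define f(λ) = c1 if λ ≤ c1·w, and f(λ) = c1·(w·c1/λ)^{c2/2} otherwise. Then the sequence λ₁ = c1, λ_{k+1} = f(λ_k), satisfies λ_k = c1·w^{B_k} with B_k = ∑_{i=1}^{k−1}(c2/2)^i(−1)^{i−1}, λ_k > c1·w for all k ≥ 1, and λ_k converges to c1·w^{c2/(c2+2)}. -/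
/-!
Write `λ = c1 · w ^ B`. Since `0 < w < 1`, the point lies above the threshold `c1 · w` exactly
when `B < 1`, and there `f` acts on the exponent as the affine map `B ↦ (c2/2)(1 - B)`. Its orbit
from `B = 0` is the alternating geometric sum `B_k`, which stays in `[0, c2/2] ⊆ [0, 1)`, so the
flat branch of `f` is never reached, and `B_k → (c2/2)/(1 + c2/2) = c2/(c2 + 2)`.
-/

open Real Filter Topology Finset

noncomputable section

def altGeomSum (r : ℝ) (n : ℕ) : ℝ := ∑ i ∈ range n, r ^ (i + 1) * (-1 : ℝ) ^ i

lemma altGeomSum_eq_mul_geom_sum (r : ℝ) (n : ℕ) :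
    altGeomSum r n = r * ∑ i ∈ range n, (-r) ^ i := by
  rw [altGeomSum, mul_sum]
  exact sum_congr rfl fun i _ => by rw [neg_pow]; ring

lemma altGeomSum_succ (r : ℝ) (n : ℕ) : altGeomSum r (n + 1) = r * (1 - altGeomSum r n) := by
  rw [altGeomSum_eq_mul_geom_sum, altGeomSum_eq_mul_geom_sum, geom_sum_succ]
  ring

lemma altGeomSum_mem_Icc {r : ℝ} (hr0 : 0 ≤ r) (hr1 : r ≤ 1) (n : ℕ) :
    altGeomSum r n ∈ Set.Icc 0 r := by
  induction n with
  | zero => simpa [altGeomSum] using hr0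
  | succ n ih =>
    obtain ⟨h0, hr⟩ := ih
    rw [altGeomSum_succ]
    constructor <;> nlinarith

lemma tendsto_altGeomSum {r : ℝ} (hr : |r| < 1) :
    Tendsto (altGeomSum r) atTop (𝓝 (r / (1 + r))) := by
  have hgeom := (hasSum_geometric_of_abs_lt_one (r := -r) (by rwa [abs_neg])).tendsto_sum_nat
  simpa [funext (altGeomSum_eq_mul_geom_sum r), div_eq_mul_inv] using hgeom.const_mul r

def demandMap (c1 w r lam : ℝ) : ℝ :=
  if lam ≤ c1 * w then c1 else c1 * (w * c1 / lam) ^ r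

section

variable {c1 w : ℝ}

lemma mul_lt_mul_rpow_of_lt_one (hc1 : 0 < c1) (hw0 : 0 < w) (hw1 : w < 1) {B : ℝ}
    (hB : B < 1) : c1 * w < c1 * w ^ B := by
  have hpow := rpow_lt_rpow_of_exponent_gt hw0 hw1 hB
  rw [rpow_one] at hpow
  exact mul_lt_mul_of_pos_left hpow hc1

lemma demandMap_mul_rpow (hc1 : 0 < c1) (hw0 : 0 < w) (hw1 : w < 1) (r : ℝ) {B : ℝ}
    (hB : B < 1) : demandMap c1 w r (c1 * w ^ B) = c1 * w ^ (r * (1 - B)) := by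
  rw [demandMap, if_neg (mul_lt_mul_rpow_of_lt_one hc1 hw0 hw1 hB).not_ge, mul_comm r,
    rpow_mul hw0.le, rpow_sub hw0, rpow_one]
  congr 2
  field_simp

lemma demandMap_orbit (hc1 : 0 < c1) (hw0 : 0 < w) (hw1 : w < 1) {r : ℝ} (hr0 : 0 ≤ r)
    (hr1 : r < 1) {lam : ℕ → ℝ} (h1 : lam 1 = c1)
    (hrec : ∀ n, lam (n + 1 + 1) = demandMap c1 w r (lam (n + 1))) (n : ℕ) :
    lam (n + 1) = c1 * w ^ altGeomSum r n := by
  induction n with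
  | zero => simp [h1, altGeomSum]
  | succ n ih =>
    rw [hrec, ih, altGeomSum_succ,
      demandMap_mul_rpow hc1 hw0 hw1 r ((altGeomSum_mem_Icc hr0 hr1.le n).2.trans_lt hr1)]

end

end

/-- Theorem 1(iii): for moderately sensitive customers (`c2 < 2`) and large potential
market (`c1 > 2K/(hτ²)`), the demand sequence starting at `c1` satisfies
`λ_k = c1·w^{B_k}` with `B_k = ∑_{i=1}^{k−1}(c2/2)^i(−1)^{i−1}`, stays above `c1·w`,
and converges to `c1·w^{c2/(c2+2)}`. -/
theorem stmt_4 (c1 K h τ c2 : ℝ) (hc1 : 0 < c1) (hK : 0 < K) (hh : 0 < h) (hτ : 0 < τ)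
    (hbound : 2 * K / (h * τ ^ 2) < c1) (hc2 : 0 < c2) (hc2' : c2 < 2)
    (w : ℝ) (hw : w = 2 * K / (h * τ ^ 2 * c1))
    (f : ℝ → ℝ)
    (hf : ∀ lam : ℝ, f lam = if lam ≤ c1 * w then c1
        else c1 * (w * c1 / lam) ^ (c2 / 2))
    (lam : ℕ → ℝ) (hlam1 : lam 1 = c1)
    (hrec : ∀ k : ℕ, 1 ≤ k → lam (k + 1) = f (lam k)) :
    0 < w ∧ w < 1 ∧
    (∀ k : ℕ, 1 ≤ k →
      lam k = c1 * w ^ (∑ i ∈ Finset.range (k - 1), (c2 / 2) ^ (i + 1) * (-1 : ℝ) ^ i) ∧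
      c1 * w < lam k) ∧
    Tendsto (fun k => lam k) atTop (nhds (c1 * w ^ (c2 / (c2 + 2)))) := by
  have hw0 : 0 < w := by rw [hw]; positivity
  have hw1 : w < 1 := by rwa [hw, ← div_div, div_lt_one hc1]
  have hr0 : 0 ≤ c2 / 2 := by positivity
  have hr1 : c2 / 2 < 1 := by linarith
  have horbit := demandMap_orbit hc1 hw0 hw1 hr0 hr1 hlam1 fun n => by
    rw [hrec (n + 1) le_add_self, hf, demandMap]
  refine ⟨hw0, hw1, fun k hk => ?_, ?_⟩
  · obtain ⟨n, rfl⟩ := Nat.exists_eq_add_of_le' hk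
    rw [Nat.add_sub_cancel, horbit n]
    exact ⟨rfl, mul_lt_mul_rpow_of_lt_one hc1 hw0 hw1
      ((altGeomSum_mem_Icc hr0 hr1.le n).2.trans_lt hr1)⟩
  · rw [← tendsto_add_atTop_iff_nat 1, funext horbit,
      show c2 / (c2 + 2) = c2 / 2 / (1 + c2 / 2) by field_simp; ring]
    have hB := tendsto_altGeomSum (abs_lt.mpr ⟨by linarith, hr1⟩)
    exact (tendsto_const_nhds.rpow hB (Or.inl hw0.ne')).const_mul c1
end

section
/- Let h, λ_r, T > 0, a − bF ≥ 0, δ, r, M, F, τ > 0 and ε > 0. Suppose the KKT identity ((a−bF)/τ)(δr − hTδ/2 + F/M) + hλ_rt1/T = ω2 + ω3 holds with ω2, ω3 ≥ 0. Then the quantity ((a−bF)ε/τ)(δr − hTδ/2 + F/M) + (hλ_r/(2T))(2t1ε + ε²) is strictly positive, i.e., moving length ε from Phase 3 to Phase 1 strictly decreases the objective of model [M2]. -/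
open Real

theorem quadratic_increment_pos {A k t ε : ℝ} (hk : 0 < k) (hε : 0 < ε)
    (hslope : 0 ≤ A + k * t) : 0 < A * ε + k / 2 * (2 * t * ε + ε ^ 2) := by
  have hfirst : 0 ≤ ε * (A + k * t) := mul_nonneg hε.le hslope
  have hsecond : 0 < k * ε ^ 2 / 2 := by positivity
  calc 0 < ε * (A + k * t) + k * ε ^ 2 / 2 := by linarith
    _ = A * ε + k / 2 * (2 * t * ε + ε ^ 2) := by ring

theorem stmt_17_general (a b F δ M r h τ lr T t1 ε ω2 ω3 : ℝ)
    (hh : 0 < h) (hlr : 0 < lr) (hT : 0 < T)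
    (hε : 0 < ε) (hω2 : 0 ≤ ω2) (hω3 : 0 ≤ ω3)
    (hkkt : ((a - b * F) / τ) * (δ * r - h * T * δ / 2 + F / M) + h * lr * t1 / T
        = ω2 + ω3) :
    0 < ((a - b * F) * ε / τ) * (δ * r - h * T * δ / 2 + F / M)
        + (h * lr / (2 * T)) * (2 * t1 * ε + ε ^ 2) := by
  have hslope : 0 ≤ (a - b * F) / τ * (δ * r - h * T * δ / 2 + F / M) + h * lr / T * t1 := by
    rw [div_mul_eq_mul_div (h * lr), hkkt]
    positivity
  convert quadratic_increment_pos (by positivity) hε hslope using 1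
  ring

/-- Second part of the proof of Lemma 2: given the KKT identity
`((a−bF)/τ)(δr − hTδ/2 + F/M) + hλ_r t1/T = ω2 + ω3` with `ω2, ω3 ≥ 0`, the
objective change from moving length `ε > 0` from Phase 3 to Phase 1, namely
`((a−bF)ε/τ)(δr − hTδ/2 + F/M) + (hλ_r/(2T))(2t1ε + ε²)`, is strictly positive. -/
theorem stmt_17 (a b F δ M r h τ lr T t1 ε ω2 ω3 : ℝ)
    (hh : 0 < h) (hlr : 0 < lr) (hT : 0 < T) (haF : 0 ≤ a - b * F)
    (hδ : 0 < δ) (hr : 0 < r) (hM : 0 < M) (hF : 0 < F) (hτ : 0 < τ)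
    (hε : 0 < ε) (hω2 : 0 ≤ ω2) (hω3 : 0 ≤ ω3)
    (hkkt : ((a - b * F) / τ) * (δ * r - h * T * δ / 2 + F / M) + h * lr * t1 / T
        = ω2 + ω3) :
    0 < ((a - b * F) * ε / τ) * (δ * r - h * T * δ / 2 + F / M)
        + (h * lr / (2 * T)) * (2 * t1 * ε + ε ^ 2) :=
  stmt_17_general a b F δ M r h τ lr T t1 ε ω2 ω3 hh hlr hT hε hω2 hω3 hkkt
end
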